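/- For bounded linear operators A on H and B on K, (1/4)‖ |A|² ⊗ |B|² + |A*|² ⊗ |B*|² ‖ + (1/2)‖ Re(|A||A*| ⊗ |B||B*|) ‖ ≤ (1/4)(‖A‖‖B‖ + ‖A²‖^{1/2}‖B²‖^{1/2})² ≤ ‖A‖²‖B‖². -/

import Mathlib

/-! With `a = ‖A‖‖B‖` and `b = ‖A²‖^{1/2}‖B²‖^{1/2}`, the positive operators
`U = |A|² ⊗ |B|²` and `V = |A*|² ⊗ |B*|²` have norm at most `a²`, while `‖UV‖ ≤ a²b²` and
`‖Re W‖ ≤ ‖W‖ ≤ b²`, because `‖S ⊗ R‖ ≤ ‖S‖‖R‖` and `‖|A||A*|‖ = ‖A²‖`. Since `X² ≤ ‖X‖ X`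
for positive `X`, the C⋆-identity gives `c² = ‖(U + V)²‖ ≤ a²c + 2a²b²` for `c = ‖U + V‖`, and as
`b ≤ a` this quadratic bound forces `c ≤ a² + 2ab - b²`, which is the first inequality. The
second one is `b ≤ a`. -/

open ContinuousLinearMap

/-- Numerical radius: `w(T) = sup { |⟨Tx,x⟩| : ‖x‖ = 1 }`. -/
noncomputable def nrad {E : Type*} [NormedAddCommGroup E] [InnerProductSpace ℂ E]
    (T : E →L[ℂ] E) : ℝ :=
  ⨆ x : {x : E // ‖x‖ = 1}, ‖(inner ℂ (T x.1) x.1 : ℂ)‖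

/-- `tmul` realizes `E` as the Hilbert tensor product of `H` and `K`:
the inner product is multiplicative on elementary tensors and elementary
tensors span a dense subspace. -/
structure IsHilbertTensorMap
    {H K E : Type*} [NormedAddCommGroup H] [InnerProductSpace ℂ H]
    [NormedAddCommGroup K] [InnerProductSpace ℂ K]
    [NormedAddCommGroup E] [InnerProductSpace ℂ E]
    (tmul : H →ₗ[ℂ] K →ₗ[ℂ] E) : Prop where
  inner_tmul : ∀ (x z : H) (y w : K),
    (inner ℂ (tmul x y) (tmul z w) : ℂ) = (inner ℂ x z : ℂ) * (inner ℂ y w : ℂ)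
  dense_span :
    Dense ((Submodule.span ℂ (Set.range fun p : H × K => tmul p.1 p.2) : Submodule ℂ E) : Set E)

/-- `T` is the tensor product operator `A ⊗ B`, i.e. `T (x ⊗ y) = A x ⊗ B y`. -/
def IsTensorOp {H K E : Type*} [NormedAddCommGroup H] [InnerProductSpace ℂ H]
    [NormedAddCommGroup K] [InnerProductSpace ℂ K]
    [NormedAddCommGroup E] [InnerProductSpace ℂ E]
    (tmul : H →ₗ[ℂ] K →ₗ[ℂ] E)
    (A : H →L[ℂ] H) (B : K →L[ℂ] K) (T : E →L[ℂ] E) : Prop :=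
  ∀ (x : H) (y : K), T (tmul x y) = tmul (A x) (B y)

/-- Real part of an operator: `Re(T) = (T + T*)/2`. -/
noncomputable def reOp {E : Type*} [NormedAddCommGroup E] [InnerProductSpace ℂ E]
    [CompleteSpace E] (T : E →L[ℂ] E) : E →L[ℂ] E :=
  (2 : ℂ)⁻¹ • (T + ContinuousLinearMap.adjoint T)

/-- Imaginary part of an operator: `Im(T) = (T - T*)/(2i)`. -/
noncomputable def imOp {E : Type*} [NormedAddCommGroup E] [InnerProductSpace ℂ E]
    [CompleteSpace E] (T : E →L[ℂ] E) : E →L[ℂ] E :=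
  (2 * Complex.I)⁻¹ • (T - ContinuousLinearMap.adjoint T)

/-- The modulus `|A| = (A*A)^{1/2}`. -/
noncomputable def absOp {H : Type*} [NormedAddCommGroup H] [InnerProductSpace ℂ H]
    [CompleteSpace H] (A : H →L[ℂ] H) : H →L[ℂ] H :=
  CFC.sqrt (ContinuousLinearMap.adjoint A * A)

section CStarRing

variable {R : Type*} [NonUnitalNormedRing R] [StarRing R] [CStarRing R]

lemma norm_mul_eq_of_star_mul_self_eq {x y : R} (h : star x * x = star y * y) (z : R) :
    ‖x * z‖ = ‖y * z‖ := by
  have hsq : ‖x * z‖ * ‖x * z‖ = ‖y * z‖ * ‖y * z‖ := by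
    have key : star (x * z) * (x * z) = star (y * z) * (y * z) := by
      rw [star_mul, star_mul, mul_assoc, ← mul_assoc (star x), h]; noncomm_ring
    rw [← CStarRing.norm_star_mul_self, ← CStarRing.norm_star_mul_self, key]
  exact (mul_self_inj (norm_nonneg _) (norm_nonneg _)).mp hsq

end CStarRing

section CStarAlgebra

variable {𝒜 : Type*} [CStarAlgebra 𝒜] [PartialOrder 𝒜] [StarOrderedRing 𝒜]

lemma mul_self_le_smul_of_norm_le {a : 𝒜} (ha : 0 ≤ a) {s : ℝ} (hs : ‖a‖ ≤ s) :
    a * a ≤ s • a := by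
  set r := CFC.sqrt a
  have hr : IsSelfAdjoint r := .of_nonneg (CFC.sqrt_nonneg a)
  have hrr : r * r = a := CFC.sqrt_mul_sqrt_self a
  calc a * a = star r * a * r := by rw [hr.star_eq, ← hrr]; noncomm_ring
    _ ≤ ‖a‖ • (star r * r) := CStarAlgebra.star_left_conjugate_le_norm_smul (.of_nonneg ha)
    _ ≤ s • a := by rw [hr.star_eq, hrr]; exact smul_le_smul_of_nonneg_right hs ha

lemma sq_norm_add_le {a b : 𝒜} (ha : 0 ≤ a) (hb : 0 ≤ b) {s : ℝ} (has : ‖a‖ ≤ s)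
    (hbs : ‖b‖ ≤ s) : ‖a + b‖ ^ 2 ≤ s * ‖a + b‖ + 2 * ‖a * b‖ := by
  have ha' : IsSelfAdjoint a := .of_nonneg ha
  have hb' : IsSelfAdjoint b := .of_nonneg hb
  have hs : 0 ≤ s := (norm_nonneg a).trans has
  have hsquares : ‖a * a + b * b‖ ≤ s * ‖a + b‖ := by
    have hle : a * a + b * b ≤ s • (a + b) := by
      rw [smul_add]
      exact add_le_add (mul_self_le_smul_of_norm_le ha has) (mul_self_le_smul_of_norm_le hb hbs)
    calc ‖a * a + b * b‖ ≤ ‖s • (a + b)‖ :=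
          CStarAlgebra.norm_le_norm_of_nonneg_of_le
            (add_nonneg ha'.mul_self_nonneg hb'.mul_self_nonneg) hle
      _ = s * ‖a + b‖ := by rw [norm_smul, Real.norm_of_nonneg hs]
  have hba : ‖b * a‖ = ‖a * b‖ := by rw [← norm_star, star_mul, ha'.star_eq, hb'.star_eq]
  calc ‖a + b‖ ^ 2 = ‖(a * a + b * b) + (a * b + b * a)‖ := by
        rw [sq, ← CStarRing.norm_star_mul_self, (ha'.add hb').star_eq]; congr 1; noncomm_ring
    _ ≤ ‖a * a + b * b‖ + (‖a * b‖ + ‖b * a‖) :=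
        (norm_add_le _ _).trans (add_le_add le_rfl (norm_add_le _ _))
    _ ≤ s * ‖a + b‖ + 2 * ‖a * b‖ := by rw [hba]; linarith

end CStarAlgebra

section Modulus

variable {H : Type*} [NormedAddCommGroup H] [InnerProductSpace ℂ H] [CompleteSpace H]

lemma isSelfAdjoint_absOp (A : H →L[ℂ] H) : IsSelfAdjoint (absOp A) :=
  .of_nonneg (CFC.sqrt_nonneg _)

lemma star_absOp_mul_absOp (A : H →L[ℂ] H) : star (absOp A) * absOp A = star A * A := by
  rw [(isSelfAdjoint_absOp A).star_eq, absOp, ← star_eq_adjoint]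
  exact CFC.sqrt_mul_sqrt_self _ (star_mul_self_nonneg A)

lemma norm_absOp (A : H →L[ℂ] H) : ‖absOp A‖ = ‖A‖ := by
  simpa using norm_mul_eq_of_star_mul_self_eq (star_absOp_mul_absOp A) 1

lemma norm_absOp_sq (A : H →L[ℂ] H) : ‖absOp A ^ 2‖ = ‖A‖ ^ 2 := by
  have h := congrArg norm (star_absOp_mul_absOp A)
  rwa [(isSelfAdjoint_absOp A).star_eq, ← sq, CStarRing.norm_star_mul_self, ← sq] at h

lemma norm_absOp_mul_absOp_adjoint (A : H →L[ℂ] H) :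
    ‖absOp A * absOp (adjoint A)‖ = ‖A ^ 2‖ := by
  rw [norm_mul_eq_of_star_mul_self_eq (star_absOp_mul_absOp A), ← norm_star, star_mul,
    (isSelfAdjoint_absOp _).star_eq,
    norm_mul_eq_of_star_mul_self_eq (star_absOp_mul_absOp (adjoint A)), ← star_eq_adjoint,
    ← star_mul, norm_star, sq]

lemma norm_absOp_sq_mul_absOp_adjoint_sq_le (A : H →L[ℂ] H) :
    ‖absOp A ^ 2 * absOp (adjoint A) ^ 2‖ ≤ ‖A‖ ^ 2 * ‖A ^ 2‖ := by
  set P := absOp A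
  set Q := absOp (adjoint A)
  calc ‖P ^ 2 * Q ^ 2‖ = ‖P * (P * Q) * Q‖ := by noncomm_ring
    _ ≤ ‖P‖ * ‖P * Q‖ * ‖Q‖ := norm_mul₃_le
    _ = ‖A‖ ^ 2 * ‖A ^ 2‖ := by
      rw [norm_absOp_mul_absOp_adjoint, norm_absOp, norm_absOp, adjoint.norm_map]; ring

end Modulus

lemma exists_orthonormal_forall_eq_sum_smul {𝕜 K : Type*} [RCLike 𝕜] [NormedAddCommGroup K]
    [InnerProductSpace 𝕜 K] {n : ℕ} (y : Fin n → K) :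
    ∃ (m : ℕ) (e : Fin m → K) (c : Fin n → Fin m → 𝕜),
      Orthonormal 𝕜 e ∧ ∀ i, y i = ∑ k, c i k • e k := by
  set G := Submodule.span 𝕜 (Set.range y)
  have hy (i : Fin n) : y i ∈ G := Submodule.subset_span (Set.mem_range_self i)
  have : FiniteDimensional 𝕜 G := FiniteDimensional.span_of_finite 𝕜 (Set.finite_range y)
  let b := stdOrthonormalBasis 𝕜 G
  refine ⟨_, fun k => b k, fun i k => b.repr ⟨y i, hy i⟩ k,
    b.orthonormal.comp_linearIsometry G.subtypeₗᵢ, fun i => ?_⟩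
  simpa using congrArg Subtype.val (b.sum_repr ⟨y i, hy i⟩).symm

section TensorProduct

variable {H K E : Type*} [NormedAddCommGroup H] [InnerProductSpace ℂ H]
  [NormedAddCommGroup K] [InnerProductSpace ℂ K] [NormedAddCommGroup E] [InnerProductSpace ℂ E]
  {tmul : H →ₗ[ℂ] K →ₗ[ℂ] E}

local notation "⟪" x ", " y "⟫" => (inner ℂ x y : ℂ)

namespace IsHilbertTensorMap

lemma flip (htmul : IsHilbertTensorMap tmul) : IsHilbertTensorMap tmul.flip where
  inner_tmul y w x z := by
    rw [LinearMap.flip_apply, LinearMap.flip_apply, htmul.inner_tmul, mul_comm]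
  dense_span := by
    convert htmul.dense_span using 5
    ext
    simp only [Set.mem_range, Prod.exists, LinearMap.flip_apply]
    exact exists_comm

lemma mem_of_isClosed (htmul : IsHilbertTensorMap tmul) {s : Set E} (hs : IsClosed s)
    (h : ∀ (n : ℕ) (x : Fin n → H) (y : Fin n → K), ∑ i, tmul (x i) (y i) ∈ s) (z : E) :
    z ∈ s := by
  refine hs.closure_subset_iff.mpr (fun w hw => ?_) (htmul.dense_span z)
  obtain ⟨n, f, g, rfl⟩ := Submodule.mem_span_set'.mp hw
  choose p hp using fun i => (g i).2
  convert h n (fun i => f i • (p i).1) (fun i => (p i).2) using 2 with i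
  rw [← hp i, map_smul, LinearMap.smul_apply]

lemma inner_sum_tmul (htmul : IsHilbertTensorMap tmul) {m n : ℕ} (x : Fin m → H)
    (y : Fin m → K) (x' : Fin n → H) (y' : Fin n → K) :
    ⟪∑ i, tmul (x i) (y i), ∑ j, tmul (x' j) (y' j)⟫ =
      ∑ i, ∑ j, ⟪x i, x' j⟫ * ⟪y i, y' j⟫ := by
  simp only [sum_inner, inner_sum, htmul.inner_tmul]
  exact Finset.sum_comm

lemma norm_sq_sum_tmul_orthonormal (htmul : IsHilbertTensorMap tmul) {m : ℕ} (x : Fin m → H)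
    {e : Fin m → K} (he : Orthonormal ℂ e) :
    ‖∑ k, tmul (x k) (e k)‖ ^ 2 = ∑ k, ‖x k‖ ^ 2 := by
  have h := htmul.inner_sum_tmul x e x e
  simp only [orthonormal_iff_ite.mp he, mul_ite, mul_one, mul_zero, Finset.sum_ite_eq,
    Finset.mem_univ, if_true, inner_self_eq_norm_sq_to_K (𝕜 := ℂ)] at h
  exact_mod_cast h

lemma norm_sum_tmul_map_left_le (htmul : IsHilbertTensorMap tmul) (S : H →L[ℂ] H) {n : ℕ}
    (x : Fin n → H) (y : Fin n → K) :
    ‖∑ i, tmul (S (x i)) (y i)‖ ≤ ‖S‖ * ‖∑ i, tmul (x i) (y i)‖ := by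
  -- over an orthonormal basis of `span (range y)` the sum has orthonormal right factors
  obtain ⟨m, e, c, he, hy⟩ := exists_orthonormal_forall_eq_sum_smul (𝕜 := ℂ) y
  have regroup (T : H →L[ℂ] H) :
      ∑ i, tmul (T (x i)) (y i) = ∑ k, tmul (T (∑ i, c i k • x i)) (e k) := by
    simp only [hy, map_sum, map_smul, LinearMap.sum_apply, LinearMap.smul_apply]
    exact Finset.sum_comm
  have hx := regroup 1
  simp only [one_apply_eq_self] at hx
  rw [regroup S, hx]
  refine le_of_sq_le_sq ?_ (by positivity)
  rw [mul_pow, htmul.norm_sq_sum_tmul_orthonormal _ he, htmul.norm_sq_sum_tmul_orthonormal _ he,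
    Finset.mul_sum]
  gcongr with k
  rw [← mul_pow]
  gcongr
  exact S.le_opNorm _

lemma norm_sum_tmul_map_right_le (htmul : IsHilbertTensorMap tmul) (R : K →L[ℂ] K) {n : ℕ}
    (x : Fin n → H) (y : Fin n → K) :
    ‖∑ i, tmul (x i) (R (y i))‖ ≤ ‖R‖ * ‖∑ i, tmul (x i) (y i)‖ :=
  htmul.flip.norm_sum_tmul_map_left_le R y x

end IsHilbertTensorMap

namespace IsTensorOp

variable {S S' : H →L[ℂ] H} {R R' : K →L[ℂ] K} {T T' : E →L[ℂ] E}

lemma mul (hT : IsTensorOp tmul S R T) (hT' : IsTensorOp tmul S' R' T') :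
    IsTensorOp tmul (S * S') (R * R') (T * T') := fun x y => by
  simp only [mul_apply_eq_comp]
  rw [hT', hT]

lemma apply_sum (hT : IsTensorOp tmul S R T) {n : ℕ} (x : Fin n → H) (y : Fin n → K) :
    T (∑ i, tmul (x i) (y i)) = ∑ i, tmul (S (x i)) (R (y i)) := by
  rw [map_sum]
  exact Finset.sum_congr rfl fun i _ => hT _ _

lemma norm_le (htmul : IsHilbertTensorMap tmul) (hT : IsTensorOp tmul S R T) :
    ‖T‖ ≤ ‖S‖ * ‖R‖ := by
  refine T.opNorm_le_bound (by positivity) fun z => ?_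
  refine htmul.mem_of_isClosed (s := {w | ‖T w‖ ≤ ‖S‖ * ‖R‖ * ‖w‖})
    (isClosed_le (by fun_prop) (by fun_prop)) (fun n x y => ?_) z
  calc ‖T (∑ i, tmul (x i) (y i))‖ = ‖∑ i, tmul (S (x i)) (R (y i))‖ := by rw [hT.apply_sum]
    _ ≤ ‖S‖ * ‖∑ i, tmul (x i) (R (y i))‖ := htmul.norm_sum_tmul_map_left_le S _ _
    _ ≤ ‖S‖ * (‖R‖ * ‖∑ i, tmul (x i) (y i)‖) := by
      gcongr; exact htmul.norm_sum_tmul_map_right_le R _ _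
    _ = ‖S‖ * ‖R‖ * ‖∑ i, tmul (x i) (y i)‖ := by ring

open scoped ComplexOrder in
lemma nonneg [CompleteSpace H] [CompleteSpace K] (htmul : IsHilbertTensorMap tmul)
    {P : H →L[ℂ] H} {Q : K →L[ℂ] K} (hP : IsSelfAdjoint P) (hQ : IsSelfAdjoint Q)
    (hT : IsTensorOp tmul (P ^ 2) (Q ^ 2) T) : 0 ≤ T := by
  have hP' (u v : H) : ⟪P (P u), v⟫ = ⟪P u, P v⟫ := hP.isSymmetric _ _
  have hQ' (u v : K) : ⟪Q (Q u), v⟫ = ⟪Q u, Q v⟫ := hQ.isSymmetric _ _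
  have hnonneg : ∀ z, 0 ≤ ⟪T z, z⟫ := htmul.mem_of_isClosed (s := {z | 0 ≤ ⟪T z, z⟫})
    (isClosed_le continuous_const (T.continuous.inner continuous_id)) fun n x y => by
      have hsq : ⟪T (∑ i, tmul (x i) (y i)), ∑ i, tmul (x i) (y i)⟫ =
          ⟪∑ i, tmul (P (x i)) (Q (y i)), ∑ i, tmul (P (x i)) (Q (y i))⟫ := by
        simp only [hT.apply_sum, htmul.inner_sum_tmul, sq, mul_apply_eq_comp, hP', hQ']
      rw [Set.mem_ofPred, hsq, inner_self_eq_norm_sq_to_K]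
      positivity
  rw [nonneg_iff_isPositive, isPositive_iff_complex]
  intro z
  obtain ⟨hre, him⟩ := Complex.nonneg_iff.mp (hnonneg z)
  exact ⟨Complex.ext rfl (by simpa using him), hre⟩

end IsTensorOp

end TensorProduct

lemma norm_reOp_le {E : Type*} [NormedAddCommGroup E] [InnerProductSpace ℂ E] [CompleteSpace E]
    (T : E →L[ℂ] E) : ‖reOp T‖ ≤ ‖T‖ :=
  calc ‖reOp T‖ ≤ 2⁻¹ * (‖T‖ + ‖adjoint T‖) := by
        rw [reOp, norm_smul, norm_inv, Complex.norm_two]; gcongr; exact norm_add_le _ _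
    _ = ‖T‖ := by rw [adjoint.norm_map]; ring

lemma sqrt_norm_sq_le_norm {R : Type*} [SeminormedRing R] (x : R) : √‖x ^ 2‖ ≤ ‖x‖ :=
  (Real.sqrt_le_left (norm_nonneg x)).mpr (by rw [sq, sq]; exact norm_mul_le x x)

theorem stmt4
    {H K E : Type*} [NormedAddCommGroup H] [InnerProductSpace ℂ H] [CompleteSpace H]
    [NormedAddCommGroup K] [InnerProductSpace ℂ K] [CompleteSpace K]
    [NormedAddCommGroup E] [InnerProductSpace ℂ E] [CompleteSpace E]
    (tmul : H →ₗ[ℂ] K →ₗ[ℂ] E) (htmul : IsHilbertTensorMap tmul)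
    (A : H →L[ℂ] H) (B : K →L[ℂ] K)
    (U V W : E →L[ℂ] E)
    (hU : IsTensorOp tmul (absOp A ^ 2) (absOp B ^ 2) U)
    (hV : IsTensorOp tmul (absOp (ContinuousLinearMap.adjoint A) ^ 2)
      (absOp (ContinuousLinearMap.adjoint B) ^ 2) V)
    (hW : IsTensorOp tmul (absOp A * absOp (ContinuousLinearMap.adjoint A))
      (absOp B * absOp (ContinuousLinearMap.adjoint B)) W) :
    (1 / 4) * ‖U + V‖ + (1 / 2) * ‖reOp W‖ ≤
      (1 / 4) * (‖A‖ * ‖B‖ + Real.sqrt ‖A ^ 2‖ * Real.sqrt ‖B ^ 2‖) ^ 2 ∧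
    (1 / 4) * (‖A‖ * ‖B‖ + Real.sqrt ‖A ^ 2‖ * Real.sqrt ‖B ^ 2‖) ^ 2 ≤
      ‖A‖ ^ 2 * ‖B‖ ^ 2 := by
  set a := ‖A‖ * ‖B‖
  set b := √‖A ^ 2‖ * √‖B ^ 2‖
  have hb : 0 ≤ b := by positivity
  have hba : b ≤ a := mul_le_mul (sqrt_norm_sq_le_norm A) (sqrt_norm_sq_le_norm B)
    (Real.sqrt_nonneg _) (norm_nonneg _)
  have hb2 : b ^ 2 = ‖A ^ 2‖ * ‖B ^ 2‖ := by
    rw [mul_pow, Real.sq_sqrt (norm_nonneg _), Real.sq_sqrt (norm_nonneg _)]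
  have hUn : ‖U‖ ≤ a ^ 2 :=
    (hU.norm_le htmul).trans_eq (by rw [norm_absOp_sq, norm_absOp_sq]; ring)
  have hVn : ‖V‖ ≤ a ^ 2 := (hV.norm_le htmul).trans_eq (by
    rw [norm_absOp_sq, norm_absOp_sq, adjoint.norm_map, adjoint.norm_map]; ring)
  have hUVn : ‖U * V‖ ≤ a ^ 2 * b ^ 2 := ((hU.mul hV).norm_le htmul).trans (by
    rw [hb2]
    calc _ ≤ (‖A‖ ^ 2 * ‖A ^ 2‖) * (‖B‖ ^ 2 * ‖B ^ 2‖) :=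
          mul_le_mul (norm_absOp_sq_mul_absOp_adjoint_sq_le A)
            (norm_absOp_sq_mul_absOp_adjoint_sq_le B) (norm_nonneg _) (by positivity)
      _ = a ^ 2 * (‖A ^ 2‖ * ‖B ^ 2‖) := by ring)
  have hWn : ‖reOp W‖ ≤ b ^ 2 := (norm_reOp_le W).trans ((hW.norm_le htmul).trans_eq (by
    rw [norm_absOp_mul_absOp_adjoint, norm_absOp_mul_absOp_adjoint, hb2]))
  have hsq := sq_norm_add_le
    (hU.nonneg htmul (isSelfAdjoint_absOp A) (isSelfAdjoint_absOp B))
    (hV.nonneg htmul (isSelfAdjoint_absOp _) (isSelfAdjoint_absOp _)) hUn hVn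
  -- if `c = ‖U + V‖` exceeded `d = a² + 2ab - b²`, then `c (c - a²) > d (d - a²) ≥ 2a²b²`
  have hUV : ‖U + V‖ ≤ a ^ 2 + 2 * a * b - b ^ 2 := by
    nlinarith [mul_nonneg hb (sub_nonneg.mpr hba)]
  constructor <;> nlinarith
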